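/- arXiv:2012.10242 — 4 statements merged into one kernel-verified Lean document; each statement's English description precedes it below -/
import Mathlib

section
/- Let G = SijTji be a Gauss word where S and T contain neither i nor j. Every z₀ ∈ Sub^(0)(G) decomposes uniquely as z₀ = σ(z₀)τ(z₀) with σ(z₀) a sub-word of S and τ(z₀) a sub-word of T. Define z₂(z₀) = σ(z₀)ij τ(z₀)ji, z₁(z₀) = σ(z₀)i τ(z₀)i, z₁'(z₀) = σ(z₀)j τ(z₀)j. Then Sub^(1)(G) ∪ Sub^(2)(G) is the disjoint union of the images of z₁, z₁', and z₂, each of which is injective on Sub^(0)(G). -/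
/-! A sub-word of `G = S i j U j i` keeps the letters of some set `A`; with `E = A ∩ {i, j}` it
reads `σ x τ y`, where `σ`, `τ` are the letters of `A` in `S`, `U` and `x`, `y` those of `E` in `i j`,
`j i`. The three families of the statement are the cases `E = {i}, {j}, {i, j}`: they are told
apart by which of `i`, `j` occurs, and `σ`, `τ` are recovered by cutting at the first `i` or `j`.
As for the uniqueness of `z₀ = σ τ`: if `σ' τ'` splits `z₀` at another place, the piece between
the two cuts holds a letter lying in both `S` and `U`, which then occurs twice in `τ` or in `σ`,
hence three times in the Gauss word `S U`. -/

open scoped Classical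

/-- A Gauss word: every letter occurring in it occurs exactly twice. -/
def IsGauss (w : List ℕ) : Prop := ∀ a ∈ w, w.count a = 2

/-- Isomorphism of Gauss words (as lists): a relabeling of letters together with a
cyclic rotation and possibly a reflection. -/
def WordIso (v w : List ℕ) : Prop :=
  ∃ f : ℕ → ℕ, Set.InjOn f {a | a ∈ v} ∧
    ∃ t : ℕ, w = (v.map f).rotate t ∨ w = ((v.map f).reverse).rotate t

/-- `z` is a sub-Gauss word of `w`: obtained by deleting all occurrences of some
set of letters (i.e. keeping the letters in some finite set `A`). -/
def IsSubword (z w : List ℕ) : Prop :=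
  ∃ A : Finset ℕ, z = w.filter (fun a => decide (a ∈ A))

/-- `subCount x G` = number of sub-Gauss words of `G` whose isomorphism class is
that of `x` (sub-Gauss words being parametrized by the subset of retained letters). -/
noncomputable def subCount (x G : List ℕ) : ℕ :=
  (G.toFinset.powerset.filter
    (fun A => WordIso (G.filter (fun a => decide (a ∈ A))) x)).card

/-- `SubW G D m` : the set of sub-Gauss words of `G` containing exactly `m` of the
distinguished letters in `D`. -/
def SubW (G : List ℕ) (D : Finset ℕ) (m : ℕ) : Set (List ℕ) :=
  {z | ∃ A : Finset ℕ, A ⊆ G.toFinset ∧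
    z = G.filter (fun a => decide (a ∈ A)) ∧ (A ∩ D).card = m}

/-- A chord is isolated iff the two occurrences of its letter are cyclically adjacent. -/
def HasIsolatedChord (w : List ℕ) : Prop :=
  ∃ a t, a ∈ w ∧ (w.rotate t).take 2 = [a, a]

/-- The chord diagram of `g` is a product of two nonempty chord diagrams. -/
def IsProductDiagram (g : List ℕ) : Prop :=
  ∃ v w : List ℕ, v ≠ [] ∧ w ≠ [] ∧ IsGauss v ∧ IsGauss w ∧
    (∀ a ∈ v, a ∉ w) ∧ WordIso g (v ++ w)

/-- The coefficient of the chord diagram (class) of `y` in a formal ℤ-linear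
combination of chord diagrams, given as a list of (coefficient, Gauss word) pairs. -/
noncomputable def coef (y : List ℕ) (r : List (ℤ × List ℕ)) : ℤ :=
  (r.map (fun p => p.1 * (if WordIso p.2 y then 1 else 0))).sum

namespace List

theorem duplicate_of_append_sublist {α : Type*} {a : α} {l₁ l₂ M : List α} (h₁ : a ∈ l₁)
    (h₂ : a ∈ l₂) (h : l₁ ++ l₂ <+ M) : M.Duplicate a :=
  duplicate_iff_sublist.2 <|
    ((singleton_sublist.2 h₁).append (singleton_sublist.2 h₂)).trans h

theorem filter_mem_filter_of_subset {α : Type*} [DecidableEq α] {L M : List α} (h : L ⊆ M)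
    (A : Finset α) :
    L.filter (· ∈ M.filter (· ∈ A)) = L.filter (· ∈ A) :=
  filter_congr fun a ha => by simp [h ha]

theorem append_cons_inj_of_notMem_of_notMem {α : Type*} {a : α} {xs ys rs ts : List α}
    (hx : a ∉ xs) (hy : a ∉ ys) : xs ++ a :: rs = ys ++ a :: ts ↔ xs = ys ∧ rs = ts := by
  induction xs generalizing ys with
  | nil => cases ys <;> grind
  | cons b xs ih => cases ys <;> grind

end List

theorem IsGauss.not_duplicate {S U : List ℕ} (h : IsGauss (S ++ U)) {a : ℕ} (haS : a ∈ S)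
    (haU : a ∈ U) : ¬ S.Duplicate a ∧ ¬ U.Duplicate a := by
  have hcount := h a (List.mem_append_left U haS)
  have hS := List.count_pos_iff.2 haS
  have hU := List.count_pos_iff.2 haU
  simp only [List.duplicate_iff_two_le_count, List.count_append] at hcount ⊢
  omega

theorem IsGauss.eq_filter_of_append_eq {S U : List ℕ} (hSU : IsGauss (S ++ U)) {σ τ : List ℕ}
    (hσ : σ.Sublist S) (hτ : τ.Sublist U) {A : Finset ℕ}
    (h : σ ++ τ = S.filter (· ∈ A) ++ U.filter (· ∈ A)) :
    σ = S.filter (· ∈ A) ∧ τ = U.filter (· ∈ A) := by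
  rcases List.append_eq_append_iff.1 h with ⟨m, hS, hτm⟩ | ⟨m, hσm, hU⟩
  · obtain rfl : m = [] := by
      refine List.eq_nil_iff_forall_not_mem.2 fun a ham => ?_
      have haSA : a ∈ S.filter (· ∈ A) := hS ▸ List.mem_append_right σ ham
      have haU : a ∈ U := hτ.subset (hτm ▸ List.mem_append_left _ ham)
      simp only [List.mem_filter, decide_eq_true_eq] at haSA
      refine (hSU.not_duplicate haSA.1 haU).2 <| List.duplicate_of_append_sublist ham ?_ (hτm ▸ hτ)
      simp [haU, haSA.2]
    simp_all
  · obtain rfl : m = [] := by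
      refine List.eq_nil_iff_forall_not_mem.2 fun a ham => ?_
      have haUA : a ∈ U.filter (· ∈ A) := hU ▸ List.mem_append_left _ ham
      have haS : a ∈ S := hσ.subset (hσm ▸ List.mem_append_right _ ham)
      simp only [List.mem_filter, decide_eq_true_eq] at haUA
      refine (hSU.not_duplicate haS haUA.1).1 <| List.duplicate_of_append_sublist ?_ ham (hσm ▸ hσ)
      simp [haS, haUA.2]
    simp_all

theorem Finset.subset_pair_iff_eq {α : Type*} [DecidableEq α] {a b : α} {E : Finset α} :
    E ⊆ {a, b} ↔ E = ∅ ∨ E = {a} ∨ E = {b} ∨ E = {a, b} := by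
  rw [← Finset.coe_subset, Finset.coe_pair, Set.subset_pair_iff_eq]
  simp only [← Finset.coe_singleton, ← Finset.coe_insert, Finset.coe_eq_empty, Finset.coe_inj]

def splice (S U x y : List ℕ) (A : Finset ℕ) : List ℕ :=
  S.filter (· ∈ A) ++ x ++ U.filter (· ∈ A) ++ y

section splice

variable {S U : List ℕ}

theorem filter_mem_splice_nil (x y : List ℕ) (A : Finset ℕ) :
    S.filter (· ∈ splice S U [] [] A) ++ x ++ U.filter (· ∈ splice S U [] [] A) ++ y =
      splice S U x y A := by
  have h : splice S U [] [] A = (S ++ U).filter (· ∈ A) := by simp [splice]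
  rw [h, List.filter_mem_filter_of_subset (List.subset_append_left S U),
    List.filter_mem_filter_of_subset (List.subset_append_right S U)]
  rfl

theorem image_range_splice_nil (x y : List ℕ) :
    (fun z => S.filter (· ∈ z) ++ x ++ U.filter (· ∈ z) ++ y) '' Set.range (splice S U [] []) =
      Set.range (splice S U x y) := by
  rw [← Set.range_comp]
  exact congrArg Set.range (funext (filter_mem_splice_nil x y))

theorem mem_splice_iff {c : ℕ} (hcS : c ∉ S) (hcU : c ∉ U) {x y : List ℕ} {A : Finset ℕ} :
    c ∈ splice S U x y A ↔ c ∈ x ++ y := by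
  simp [splice, hcS, hcU]

theorem disjoint_range_splice {c : ℕ} (hcS : c ∉ S) (hcU : c ∉ U) {x y x' y' : List ℕ}
    (h : c ∉ x ++ y) (h' : c ∈ x' ++ y') :
    Disjoint (Set.range (splice S U x y)) (Set.range (splice S U x' y')) := by
  rw [Set.disjoint_left]
  rintro _ ⟨A, rfl⟩ ⟨B, hB⟩
  exact h ((mem_splice_iff hcS hcU).1 (hB ▸ (mem_splice_iff hcS hcU).2 h'))

theorem splice_inj {a : ℕ} (haS : a ∉ S) {x y : List ℕ} {A B : Finset ℕ} :
    splice S U (a :: x) y A = splice S U (a :: x) y B ↔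
      S.filter (· ∈ A) = S.filter (· ∈ B) ∧ U.filter (· ∈ A) = U.filter (· ∈ B) := by
  have hA : a ∉ S.filter (· ∈ A) := fun h => haS (List.mem_of_mem_filter h)
  have hB : a ∉ S.filter (· ∈ B) := fun h => haS (List.mem_of_mem_filter h)
  simp only [splice, List.append_assoc, List.cons_append]
  rw [List.append_cons_inj_of_notMem_of_notMem hA hB]
  simp

theorem injOn_range_splice_nil {a : ℕ} (haS : a ∉ S) (x y : List ℕ) :
    Set.InjOn (fun z => S.filter (· ∈ z) ++ a :: x ++ U.filter (· ∈ z) ++ y)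
      (Set.range (splice S U [] [])) := by
  rintro _ ⟨A, rfl⟩ _ ⟨B, rfl⟩ h
  simp only [filter_mem_splice_nil, splice_inj haS] at h
  simp [splice, h.1, h.2]

end splice

section SubW

variable {S U : List ℕ} {i j : ℕ}

theorem filter_append_eq_splice (x y : List ℕ) (A : Finset ℕ) :
    (S ++ x ++ U ++ y).filter (· ∈ A) = splice S U (x.filter (· ∈ A)) (y.filter (· ∈ A)) A := by
  simp [splice]

theorem splice_congr {x y : List ℕ} {A B : Finset ℕ} (h : ∀ a ∈ S ++ U, a ∈ A ↔ a ∈ B) :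
    splice S U x y A = splice S U x y B := by
  have hS : S.filter (· ∈ A) = S.filter (· ∈ B) :=
    List.filter_congr fun a ha => by simp [h a (List.mem_append_left U ha)]
  have hU : U.filter (· ∈ A) = U.filter (· ∈ B) :=
    List.filter_congr fun a ha => by simp [h a (List.mem_append_right S ha)]
  rw [splice, splice, hS, hU]

theorem mem_subW_iff (hi : i ∉ S ++ U) (hj : j ∉ S ++ U) {m : ℕ} {z : List ℕ} :
    z ∈ SubW (S ++ [i, j] ++ U ++ [j, i]) {i, j} m ↔
      ∃ E ⊆ ({i, j} : Finset ℕ), E.card = m ∧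
        z ∈ Set.range (splice S U ([i, j].filter (· ∈ E)) ([j, i].filter (· ∈ E))) := by
  constructor
  · rintro ⟨A, -, rfl, rfl⟩
    refine ⟨A ∩ {i, j}, Finset.inter_subset_right, rfl, A, ?_⟩
    rw [filter_append_eq_splice]
    congr 1 <;> exact List.filter_congr fun a ha => by grind
  · rintro ⟨E, hE, rfl, A, rfl⟩
    have hEij : ∀ a ∈ E, a = i ∨ a = j := fun a ha => by simpa using hE ha
    set B := A ∩ (S ++ U).toFinset ∪ E
    have hBA : ∀ a ∈ S ++ U, a ∈ B ↔ a ∈ A := fun a ha => by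
      have : a ∉ E := fun haE => by rcases hEij a haE with rfl | rfl <;> contradiction
      simp only [B, Finset.mem_union, Finset.mem_inter, List.mem_toFinset]
      tauto
    have hBE : ∀ a, a = i ∨ a = j → (a ∈ B ↔ a ∈ E) := by
      rintro a (rfl | rfl) <;>
        simp only [B, Finset.mem_union, Finset.mem_inter, List.mem_toFinset] <;> tauto
    refine ⟨B, fun a ha => ?_, ?_, ?_⟩
    · rcases Finset.mem_union.1 ha with ha | ha
      · simp_all [B]
      · rcases hEij a ha with rfl | rfl <;> simp
    · rw [filter_append_eq_splice, splice_congr hBA]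
      congr 1 <;> exact List.filter_congr fun a ha => by simp [hBE a (by simpa [or_comm] using ha)]
    · congr 1
      ext a
      simp only [Finset.mem_inter, Finset.mem_insert, Finset.mem_singleton]
      grind

theorem subW_zero_eq (hi : i ∉ S ++ U) (hj : j ∉ S ++ U) :
    SubW (S ++ [i, j] ++ U ++ [j, i]) {i, j} 0 = Set.range (splice S U [] []) := by
  ext z
  rw [mem_subW_iff hi hj]
  simp

theorem subW_one_union_subW_two_eq (hi : i ∉ S ++ U) (hj : j ∉ S ++ U) (hij : i ≠ j) :
    SubW (S ++ [i, j] ++ U ++ [j, i]) {i, j} 1 ∪ SubW (S ++ [i, j] ++ U ++ [j, i]) {i, j} 2 =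
      Set.range (splice S U [i] [i]) ∪ Set.range (splice S U [j] [j]) ∪
        Set.range (splice S U [i, j] [j, i]) := by
  ext z
  rw [Set.mem_union, mem_subW_iff hi hj, mem_subW_iff hi hj]
  simp only [Finset.subset_pair_iff_eq]
  simp [or_and_right, exists_or, hij, hij.symm, Finset.card_pair hij, List.filter_cons, or_assoc]

end SubW

theorem existsUnique_subword_append_of_mem_range_splice {S U : List ℕ} (hSU : IsGauss (S ++ U))
    {z₀ : List ℕ} (hz₀ : z₀ ∈ Set.range (splice S U [] [])) :
    ∃! p : List ℕ × List ℕ, IsSubword p.1 S ∧ IsSubword p.2 U ∧ z₀ = p.1 ++ p.2 := by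
  obtain ⟨A, rfl⟩ := hz₀
  refine ⟨(S.filter (· ∈ A), U.filter (· ∈ A)), ⟨⟨A, rfl⟩, ⟨A, rfl⟩, by simp [splice]⟩, ?_⟩
  rintro ⟨_, _⟩ ⟨⟨B, rfl⟩, ⟨C, rfl⟩, h⟩
  obtain ⟨hS, hU⟩ := hSU.eq_filter_of_append_eq List.filter_sublist List.filter_sublist
    (by simpa [splice] using h.symm)
  exact Prod.ext hS hU

/-- for `G = SijTji` (here the second word is called `U`), every
`z₀ ∈ Sub^(0)(G)` decomposes uniquely as `σ(z₀)τ(z₀)` with `σ(z₀)` a sub-word of `S`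
and `τ(z₀)` a sub-word of `U`; and `Sub^(1)(G) ∪ Sub^(2)(G)` is the disjoint union of
the images of the maps `z₁ : z₀ ↦ σ(z₀) i τ(z₀) i`, `z₁' : z₀ ↦ σ(z₀) j τ(z₀) j` and
`z₂ : z₀ ↦ σ(z₀) ij τ(z₀) ji`, each of which is injective on `Sub^(0)(G)`. -/
theorem sub_decomposition_strongRII (S U : List ℕ) (hSU : IsGauss (S ++ U))
    (i j : ℕ) (hi : i ∉ S ++ U) (hj : j ∉ S ++ U) (hij : i ≠ j) :
    (∀ z₀ ∈ SubW (S ++ [i, j] ++ U ++ [j, i]) {i, j} 0,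
        ∃! p : List ℕ × List ℕ,
          IsSubword p.1 S ∧ IsSubword p.2 U ∧ z₀ = p.1 ++ p.2) ∧
    (SubW (S ++ [i, j] ++ U ++ [j, i]) {i, j} 1 ∪
        SubW (S ++ [i, j] ++ U ++ [j, i]) {i, j} 2 =
      (fun z => S.filter (fun a => decide (a ∈ z)) ++ [i] ++
          U.filter (fun a => decide (a ∈ z)) ++ [i]) ''
            SubW (S ++ [i, j] ++ U ++ [j, i]) {i, j} 0 ∪
      (fun z => S.filter (fun a => decide (a ∈ z)) ++ [j] ++
          U.filter (fun a => decide (a ∈ z)) ++ [j]) ''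
            SubW (S ++ [i, j] ++ U ++ [j, i]) {i, j} 0 ∪
      (fun z => S.filter (fun a => decide (a ∈ z)) ++ [i, j] ++
          U.filter (fun a => decide (a ∈ z)) ++ [j, i]) ''
            SubW (S ++ [i, j] ++ U ++ [j, i]) {i, j} 0) ∧
    (Disjoint
      ((fun z => S.filter (fun a => decide (a ∈ z)) ++ [i] ++
          U.filter (fun a => decide (a ∈ z)) ++ [i]) ''
            SubW (S ++ [i, j] ++ U ++ [j, i]) {i, j} 0)
      ((fun z => S.filter (fun a => decide (a ∈ z)) ++ [j] ++
          U.filter (fun a => decide (a ∈ z)) ++ [j]) ''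
            SubW (S ++ [i, j] ++ U ++ [j, i]) {i, j} 0)) ∧
    (Disjoint
      ((fun z => S.filter (fun a => decide (a ∈ z)) ++ [i] ++
          U.filter (fun a => decide (a ∈ z)) ++ [i]) ''
            SubW (S ++ [i, j] ++ U ++ [j, i]) {i, j} 0)
      ((fun z => S.filter (fun a => decide (a ∈ z)) ++ [i, j] ++
          U.filter (fun a => decide (a ∈ z)) ++ [j, i]) ''
            SubW (S ++ [i, j] ++ U ++ [j, i]) {i, j} 0)) ∧
    (Disjoint
      ((fun z => S.filter (fun a => decide (a ∈ z)) ++ [j] ++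
          U.filter (fun a => decide (a ∈ z)) ++ [j]) ''
            SubW (S ++ [i, j] ++ U ++ [j, i]) {i, j} 0)
      ((fun z => S.filter (fun a => decide (a ∈ z)) ++ [i, j] ++
          U.filter (fun a => decide (a ∈ z)) ++ [j, i]) ''
            SubW (S ++ [i, j] ++ U ++ [j, i]) {i, j} 0)) ∧
    (Set.InjOn (fun z => S.filter (fun a => decide (a ∈ z)) ++ [i] ++
          U.filter (fun a => decide (a ∈ z)) ++ [i])
        (SubW (S ++ [i, j] ++ U ++ [j, i]) {i, j} 0)) ∧
    (Set.InjOn (fun z => S.filter (fun a => decide (a ∈ z)) ++ [j] ++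
          U.filter (fun a => decide (a ∈ z)) ++ [j])
        (SubW (S ++ [i, j] ++ U ++ [j, i]) {i, j} 0)) ∧
    (Set.InjOn (fun z => S.filter (fun a => decide (a ∈ z)) ++ [i, j] ++
          U.filter (fun a => decide (a ∈ z)) ++ [j, i])
        (SubW (S ++ [i, j] ++ U ++ [j, i]) {i, j} 0)) := by
  rw [subW_one_union_subW_two_eq hi hj hij, subW_zero_eq hi hj, image_range_splice_nil,
    image_range_splice_nil, image_range_splice_nil]
  simp only [List.mem_append, not_or] at hi hj
  refine ⟨fun z₀ => existsUnique_subword_append_of_mem_range_splice hSU, rfl,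
    disjoint_range_splice hj.1 hj.2 (by simp [hij.symm]) (by simp),
    disjoint_range_splice hj.1 hj.2 (by simp [hij.symm]) (by simp),
    disjoint_range_splice hi.1 hi.2 (by simp [hij]) (by simp),
    injOn_range_splice_nil hi.1 _ _, injOn_range_splice_nil hj.1 _ _,
    injOn_range_splice_nil hi.1 _ _⟩
end

section
/- Suppose spherical curves P and P' are related by a single Reidemeister move of type RI, so that there are a Gauss word S and a letter i not in S with CD_P = [Sii] and CD_{P'} = [S]. If coefficients α_i (for chord diagrams x_i with between b and d chords) satisfy Σ α_i tilde_x_i([z₀ ii]) = 0 for every sub-Gauss word z₀ of S, then Σ α_i x_i(P) = Σ α_i x_i(P'). -/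
open scoped Classical

/-!
The sub-Gauss words of `S ++ [i, i]` are indexed by subsets `A` of the letters. Those with
`i ∉ A` are exactly the sub-Gauss words of `S`; those with `i ∈ A` have the form `z₀ ++ [i, i]`
for a sub-Gauss word `z₀` of `S`, and the hypothesis makes the functional vanish on them.
-/

lemma subCount_eq_sum (x G : List ℕ) : (subCount x G : ℤ) =
    ∑ A ∈ G.toFinset.powerset, if WordIso (G.filter (· ∈ A)) x then 1 else 0 := by
  rw [subCount, Finset.card_filter]
  push_cast
  rfl

lemma filter_mem_insert_of_notMem {G : List ℕ} {i : ℕ} (hi : i ∉ G) (A : Finset ℕ) :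
    G.filter (· ∈ insert i A) = G.filter (· ∈ A) :=
  List.filter_congr fun a ha => by
    simp [show a ≠ i from fun h => hi (h ▸ ha)]

lemma subCount_append_pair (x G : List ℕ) {i : ℕ} (hi : i ∉ G) :
    (subCount x (G ++ [i, i]) : ℤ) = subCount x G +
      ∑ A ∈ G.toFinset.powerset, if WordIso (G.filter (· ∈ A) ++ [i, i]) x then 1 else 0 := by
  have hletters : (G ++ [i, i]).toFinset = insert i G.toFinset := by
    ext a; simp
  rw [subCount_eq_sum, subCount_eq_sum, hletters,
    Finset.sum_powerset_insert (by simpa using hi)]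
  congr 1
  · refine Finset.sum_congr rfl fun A hA => ?_
    have hiA : i ∉ A := fun h => hi (by simpa using Finset.mem_powerset.mp hA h)
    simp [List.filter_append, hiA]
  · refine Finset.sum_congr rfl fun A _ => ?_
    rw [List.filter_append, filter_mem_insert_of_notMem hi]
    simp

theorem RI_invariance_general
    (S : List ℕ) (i : ℕ) (hi : i ∉ S)
    {ι : Type*} [Fintype ι] (α : ι → ℤ) (x : ι → List ℕ)
    (h : ∀ z₀ : List ℕ, IsSubword z₀ S →
      ∑ m, α m * (if WordIso (z₀ ++ [i, i]) (x m) then (1 : ℤ) else 0) = 0) :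
    ∑ m, α m * (subCount (x m) (S ++ [i, i]) : ℤ) =
      ∑ m, α m * (subCount (x m) S : ℤ) := by
  simp only [subCount_append_pair _ _ hi, mul_add, Finset.sum_add_distrib, Finset.mul_sum]
  rw [Finset.sum_comm, Finset.sum_eq_zero fun A _ => h _ ⟨A, rfl⟩, add_zero]

/-- invariance under RI. If `CD_P = [Sii]` and `CD_{P'} = [S]` and the
functional `Σ αₘ tilde_{xₘ}` (the `xₘ` being chord diagrams with between `b` and `d`
chords) vanishes on all Type (I) relators `[z₀ ii]` arising from sub-Gauss words `z₀`
of `S`, then `Σ αₘ xₘ(P) = Σ αₘ xₘ(P')`. -/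
theorem RI_invariance (b d : ℕ) (hb : 2 ≤ b) (hbd : b ≤ d)
    (S : List ℕ) (hS : IsGauss S) (i : ℕ) (hi : i ∉ S)
    {ι : Type*} [Fintype ι] (α : ι → ℤ) (x : ι → List ℕ)
    (hxg : ∀ m, IsGauss (x m))
    (hxc : ∀ m, 2 * b ≤ (x m).length ∧ (x m).length ≤ 2 * d)
    (h : ∀ z₀ : List ℕ, IsSubword z₀ S →
      ∑ m, α m * (if WordIso (z₀ ++ [i, i]) (x m) then (1 : ℤ) else 0) = 0) :
    ∑ m, α m * (subCount (x m) (S ++ [i, i]) : ℤ) =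
      ∑ m, α m * (subCount (x m) S : ℤ) :=
  RI_invariance_general S i hi α x h
end

section
/- Suppose spherical curves P and P' are related by a single strong Reidemeister III move, with CD_P = [SijTkiUjk] and CD_{P'} = [SjiTikUkj] for Gauss words S, T, U and fresh letters i, j, k. If the coefficients α_i satisfy Σ α_i tilde_x_i(r) = 0 for every Type (SIII) relator r, then Σ α_i x_i(P) = Σ α_i x_i(P'). -/
open scoped Classical

/-! Split a retained set of letters of `SijTkiUjk` (or `SjiTikUkj`) as `A ∪ B` with
`A` a set of letters of `STU` and `B ⊆ {i, j, k}`. For fixed `A`, the words `S T U` shrink to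
`S_A T_A U_A`. The four choices of `B` with `|B| ≤ 1` give the same sub-Gauss word on both
sides, and the four with `|B| ≥ 2` give exactly the eight words of the (SIII) relator built
from `S_A T_A U_A` and `i j k`, on which the functional vanishes. -/

namespace Finset

variable {α M : Type*} [DecidableEq α] [CommMonoid M]

@[to_additive]
theorem prod_powerset_union_of_disjoint {s t : Finset α} (hst : Disjoint s t)
    (f : Finset α → M) :
    ∏ A ∈ (s ∪ t).powerset, f A = ∏ A ∈ s.powerset, ∏ B ∈ t.powerset, f (A ∪ B) := by
  induction t using Finset.induction_on generalizing f with
  | empty => simp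
  | insert a t ha ih =>
    have has : a ∉ s := disjoint_right.1 hst (mem_insert_self a t)
    have hst' : Disjoint s t := hst.mono_right (subset_insert a t)
    rw [union_insert, prod_powerset_insert (by simp [has, ha]), ih hst',
      ih hst' fun A => f (insert a A), ← prod_mul_distrib]
    refine prod_congr rfl fun A _ => ?_
    simp only [prod_powerset_insert ha, union_insert]

end Finset

section FilterMem

variable {α : Type*} [DecidableEq α]

theorem List.filter_mem_union_of_forall_notMem_right {L : List α} {A B : Finset α}
    (h : ∀ a ∈ L, a ∉ B) : L.filter (· ∈ A ∪ B) = L.filter (· ∈ A) :=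
  List.filter_congr fun a ha => by simp [h a ha]

theorem List.filter_mem_union_of_forall_notMem_left {L : List α} {A B : Finset α}
    (h : ∀ a ∈ L, a ∉ A) : L.filter (· ∈ A ∪ B) = L.filter (· ∈ B) :=
  List.filter_congr fun a ha => by simp [h a ha]

theorem filter_mem_union_interleaved {S T U a b c : List α} {A B : Finset α}
    (hB : ∀ x ∈ S ++ T ++ U, x ∉ B) (hA : ∀ x ∈ a ++ b ++ c, x ∉ A) :
    (S ++ a ++ T ++ b ++ U ++ c).filter (· ∈ A ∪ B) =
      S.filter (· ∈ A) ++ a.filter (· ∈ B) ++ T.filter (· ∈ A) ++ b.filter (· ∈ B) ++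
        U.filter (· ∈ A) ++ c.filter (· ∈ B) := by
  simp only [List.mem_append] at hA hB
  simp only [List.filter_append]
  rw [List.filter_mem_union_of_forall_notMem_right fun x hx => hB x (.inl (.inl hx)),
    List.filter_mem_union_of_forall_notMem_right fun x hx => hB x (.inl (.inr hx)),
    List.filter_mem_union_of_forall_notMem_right fun x hx => hB x (.inr hx),
    List.filter_mem_union_of_forall_notMem_left fun x hx => hA x (.inl (.inl hx)),
    List.filter_mem_union_of_forall_notMem_left fun x hx => hA x (.inl (.inr hx)),
    List.filter_mem_union_of_forall_notMem_left fun x hx => hA x (.inr hx)]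

end FilterMem

theorem IsGauss.filter {w : List ℕ} (hw : IsGauss w) (p : ℕ → Bool) : IsGauss (w.filter p) := by
  intro a ha
  obtain ⟨haw, hpa⟩ := List.mem_filter.1 ha
  rw [List.count_filter hpa]
  exact hw a haw

/-- The paper's `tilde y ([w])`. -/
noncomputable def isoIndicator (w y : List ℕ) : ℤ := if WordIso w y then 1 else 0

theorem subCount_eq_sum_isoIndicator (y G : List ℕ) :
    (subCount y G : ℤ) = ∑ A ∈ G.toFinset.powerset, isoIndicator (G.filter (· ∈ A)) y := by
  rw [subCount, Finset.card_filter]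
  push_cast
  rfl

/-- The paper's `tilde y (r)` for the Type (SIII) relator `r` of `S T U` and `i j k`. -/
noncomputable def siiiRelatorEval (S T U : List ℕ) (i j k : ℕ) (y : List ℕ) : ℤ :=
  (isoIndicator (S ++ [i, j] ++ T ++ [k, i] ++ U ++ [j, k]) y +
      isoIndicator (S ++ [i, j] ++ T ++ [i] ++ U ++ [j]) y +
      isoIndicator (S ++ [i] ++ T ++ [k, i] ++ U ++ [k]) y +
      isoIndicator (S ++ [j] ++ T ++ [k] ++ U ++ [j, k]) y) -
    (isoIndicator (S ++ [j, i] ++ T ++ [i, k] ++ U ++ [k, j]) y +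
      isoIndicator (S ++ [j, i] ++ T ++ [i] ++ U ++ [j]) y +
      isoIndicator (S ++ [i] ++ T ++ [i, k] ++ U ++ [k]) y +
      isoIndicator (S ++ [j] ++ T ++ [k] ++ U ++ [k, j]) y)

theorem sum_powerset_isoIndicator_sub_eq_siiiRelatorEval {S T U : List ℕ} {i j k : ℕ}
    (hi : i ∉ S ++ T ++ U) (hj : j ∉ S ++ T ++ U) (hk : k ∉ S ++ T ++ U)
    (hij : i ≠ j) (hik : i ≠ k) (hjk : j ≠ k) {A : Finset ℕ}
    (hiA : i ∉ A) (hjA : j ∉ A) (hkA : k ∉ A) (y : List ℕ) :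
    ∑ B ∈ ({i, j, k} : Finset ℕ).powerset,
      (isoIndicator ((S ++ [i, j] ++ T ++ [k, i] ++ U ++ [j, k]).filter (· ∈ A ∪ B)) y -
        isoIndicator ((S ++ [j, i] ++ T ++ [i, k] ++ U ++ [k, j]).filter (· ∈ A ∪ B)) y) =
      siiiRelatorEval (S.filter (· ∈ A)) (T.filter (· ∈ A)) (U.filter (· ∈ A)) i j k y := by
  have hB : ∀ B ∈ ({i, j, k} : Finset ℕ).powerset, ∀ x ∈ S ++ T ++ U, x ∉ B :=
    fun B hB x hx hxB => by
      have hx' := Finset.mem_powerset.1 hB hxB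
      simp only [Finset.mem_insert, Finset.mem_singleton] at hx'
      rcases hx' with rfl | rfl | rfl <;> contradiction
  have hA : ∀ x, x = i ∨ x = j ∨ x = k → x ∉ A := by
    rintro x (rfl | rfl | rfl) <;> assumption
  rw [Finset.sum_congr rfl fun B hB' => by
    rw [filter_mem_union_interleaved (hB B hB') fun x hx => hA x (by simp at hx; tauto),
      filter_mem_union_interleaved (hB B hB') fun x hx => hA x (by simp at hx; tauto)]]
  rw [show ({i, j, k} : Finset ℕ) = insert i (insert j (insert k ∅)) by simp]
  simp only [Finset.sum_powerset_insert (a := i) (s := insert j (insert k ∅)) (by simp [hij, hik]),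
    Finset.sum_powerset_insert (a := j) (s := insert k ∅) (by simp [hjk]),
    Finset.sum_powerset_insert (Finset.notMem_empty k), Finset.powerset_empty,
    Finset.sum_singleton]
  simp only [siiiRelatorEval, Finset.notMem_empty, decide_false, Bool.false_eq_true,
    not_false_eq_true, List.filter_cons_of_neg, List.filter_nil, List.append_nil,
    List.append_assoc, sub_self, insert_empty_eq, Finset.mem_singleton, Finset.mem_insert,
    decide_true, List.filter_cons_of_pos, List.cons_append, List.nil_append, add_zero, zero_add,
    Bool.decide_or, Bool.or_self, Bool.or_false, Bool.or_true, hij, hik, hjk, hij.symm, hik.symm,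
    hjk.symm]
  ring

theorem strongRIII_invariance_general (S T U : List ℕ) (hSTU : IsGauss (S ++ T ++ U))
    (i j k : ℕ) (hi : i ∉ S ++ T ++ U) (hj : j ∉ S ++ T ++ U) (hk : k ∉ S ++ T ++ U)
    (hij : i ≠ j) (hik : i ≠ k) (hjk : j ≠ k)
    {ι : Type*} [Fintype ι] (α : ι → ℤ) (x : ι → List ℕ)
    (h : ∀ (S' T' U' : List ℕ) (i' j' k' : ℕ), IsGauss (S' ++ T' ++ U') →
      i' ∉ S' ++ T' ++ U' → j' ∉ S' ++ T' ++ U' → k' ∉ S' ++ T' ++ U' →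
      i' ≠ j' → i' ≠ k' → j' ≠ k' →
      ∑ m, α m *
        (((if WordIso (S' ++ [i', j'] ++ T' ++ [k', i'] ++ U' ++ [j', k']) (x m)
            then (1 : ℤ) else 0) +
          (if WordIso (S' ++ [i', j'] ++ T' ++ [i'] ++ U' ++ [j']) (x m)
            then (1 : ℤ) else 0) +
          (if WordIso (S' ++ [i'] ++ T' ++ [k', i'] ++ U' ++ [k']) (x m)
            then (1 : ℤ) else 0) +
          (if WordIso (S' ++ [j'] ++ T' ++ [k'] ++ U' ++ [j', k']) (x m)
            then (1 : ℤ) else 0)) -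
         ((if WordIso (S' ++ [j', i'] ++ T' ++ [i', k'] ++ U' ++ [k', j']) (x m)
            then (1 : ℤ) else 0) +
          (if WordIso (S' ++ [j', i'] ++ T' ++ [i'] ++ U' ++ [j']) (x m)
            then (1 : ℤ) else 0) +
          (if WordIso (S' ++ [i'] ++ T' ++ [i', k'] ++ U' ++ [k']) (x m)
            then (1 : ℤ) else 0) +
          (if WordIso (S' ++ [j'] ++ T' ++ [k'] ++ U' ++ [k', j']) (x m)
            then (1 : ℤ) else 0))) = 0) :
    ∑ m, α m * (subCount (x m) (S ++ [i, j] ++ T ++ [k, i] ++ U ++ [j, k]) : ℤ) =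
      ∑ m, α m * (subCount (x m) (S ++ [j, i] ++ T ++ [i, k] ++ U ++ [k, j]) : ℤ) := by
  set L := (S ++ T ++ U).toFinset
  have hL : Disjoint L {i, j, k} := by
    simp only [L, Finset.disjoint_insert_right, Finset.disjoint_singleton_right,
      List.mem_toFinset]
    exact ⟨hi, hj, hk⟩
  have hG : (S ++ [i, j] ++ T ++ [k, i] ++ U ++ [j, k]).toFinset = L ∪ {i, j, k} := by
    ext; simp [L]
  have hG' : (S ++ [j, i] ++ T ++ [i, k] ++ U ++ [k, j]).toFinset = L ∪ {i, j, k} := by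
    ext; simp [L]; tauto
  rw [← sub_eq_zero, ← Finset.sum_sub_distrib]
  simp only [subCount_eq_sum_isoIndicator, hG, hG', Finset.sum_powerset_union_of_disjoint hL,
    ← mul_sub, ← Finset.sum_sub_distrib]
  simp only [Finset.mul_sum (s := L.powerset)]
  rw [Finset.sum_comm]
  refine Finset.sum_eq_zero fun A hA => ?_
  have hnotA : ∀ c ∉ S ++ T ++ U, c ∉ A := fun c hc hcA =>
    hc (List.mem_toFinset.1 (Finset.mem_powerset.1 hA hcA))
  have hfilter : ∀ c ∉ S ++ T ++ U,
      c ∉ S.filter (· ∈ A) ++ T.filter (· ∈ A) ++ U.filter (· ∈ A) := fun c hc hc' =>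
    hc (List.mem_of_mem_filter (by rwa [List.filter_append, List.filter_append]))
  simp only [sum_powerset_isoIndicator_sub_eq_siiiRelatorEval hi hj hk hij hik hjk
    (hnotA i hi) (hnotA j hj) (hnotA k hk)]
  exact h _ _ _ i j k (by simpa only [List.filter_append] using hSTU.filter _)
    (hfilter i hi) (hfilter j hj) (hfilter k hk) hij hik hjk

/-- strong RIII. Suppose `CD_P = [SijTkiUjk]` and `CD_{P'} = [SjiTikUkj]`.
If the functional `Σ αₘ tilde_{xₘ}` vanishes on every Type (SIII) relator
`([S'ijT'kiU'jk] + [S'ijT'iU'j] + [S'iT'kiU'k] + [S'jT'kU'jk])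
 − ([S'jiT'ikU'kj] + [S'jiT'iU'j] + [S'iT'ikU'k] + [S'jT'kU'kj])`,
then `Σ αₘ xₘ(P) = Σ αₘ xₘ(P')`. -/
theorem strongRIII_invariance (S T U : List ℕ) (hSTU : IsGauss (S ++ T ++ U))
    (i j k : ℕ) (hi : i ∉ S ++ T ++ U) (hj : j ∉ S ++ T ++ U) (hk : k ∉ S ++ T ++ U)
    (hij : i ≠ j) (hik : i ≠ k) (hjk : j ≠ k)
    {ι : Type*} [Fintype ι] (α : ι → ℤ) (x : ι → List ℕ)
    (hxg : ∀ m, IsGauss (x m))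
    (h : ∀ (S' T' U' : List ℕ) (i' j' k' : ℕ), IsGauss (S' ++ T' ++ U') →
      i' ∉ S' ++ T' ++ U' → j' ∉ S' ++ T' ++ U' → k' ∉ S' ++ T' ++ U' →
      i' ≠ j' → i' ≠ k' → j' ≠ k' →
      ∑ m, α m *
        (((if WordIso (S' ++ [i', j'] ++ T' ++ [k', i'] ++ U' ++ [j', k']) (x m)
            then (1 : ℤ) else 0) +
          (if WordIso (S' ++ [i', j'] ++ T' ++ [i'] ++ U' ++ [j']) (x m)
            then (1 : ℤ) else 0) +
          (if WordIso (S' ++ [i'] ++ T' ++ [k', i'] ++ U' ++ [k']) (x m)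
            then (1 : ℤ) else 0) +
          (if WordIso (S' ++ [j'] ++ T' ++ [k'] ++ U' ++ [j', k']) (x m)
            then (1 : ℤ) else 0)) -
         ((if WordIso (S' ++ [j', i'] ++ T' ++ [i', k'] ++ U' ++ [k', j']) (x m)
            then (1 : ℤ) else 0) +
          (if WordIso (S' ++ [j', i'] ++ T' ++ [i'] ++ U' ++ [j']) (x m)
            then (1 : ℤ) else 0) +
          (if WordIso (S' ++ [i'] ++ T' ++ [i', k'] ++ U' ++ [k']) (x m)
            then (1 : ℤ) else 0) +
          (if WordIso (S' ++ [j'] ++ T' ++ [k'] ++ U' ++ [k', j']) (x m)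
            then (1 : ℤ) else 0))) = 0) :
    ∑ m, α m * (subCount (x m) (S ++ [i, j] ++ T ++ [k, i] ++ U ++ [j, k]) : ℤ) =
      ∑ m, α m * (subCount (x m) (S ++ [j, i] ++ T ++ [i, k] ++ U ++ [k, j]) : ℤ) :=
  strongRIII_invariance_general S T U hSTU i j k hi hj hk hij hik hjk α x h
end

section
/- Let y₁ = [ijij], y₂ = [ijkijk], y₃ = [ijkikj], and let r'₁ = [ijkikj] + [ijij] − [iijj] − [ijijkk] (interpreting terms as chord diagram classes), r'₂ = [ijkijk] − [ijkikj], r'₃ = 3[ijkikj] − [ijkijk] − 2[ijijkk], r'₄ = [ijijkk] − 2[ijkkji] + [iijjkk], r'₅ = [ijijkk] − [iijjkk]. Then the only integer vector (α₁, α₂, α₃) with α₁ tilde_y₁(r'_j) + α₂ tilde_y₂(r'_j) + α₃ tilde_y₃(r'_j) = 0 for all j = 1,...,5 is (0, 0, 0). -/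
open scoped Classical

/-! The relators r'₁, r'₂, r'₃ alone force α = 0: their coefficient vectors
(1, 0, 1), (0, 1, -1), (0, -1, 3) are linearly independent. To read off these coefficients
one must tell the words involved apart up to `WordIso`. The number of cyclic positions `i`
with `w[i] = w[i + k]` is invariant under injective relabeling, rotation and reflection;
`k = 0` gives the length, `k = 1` counts isolated chords, and `k = 3` separates
[ijkijk] from [ijkikj]. -/

namespace List

variable {α β : Type*} [DecidableEq α] [DecidableEq β]

def cyclicMatchCount (k : ℕ) (w : List α) : ℕ :=
  (w.zip (w.rotate k)).countP fun p => p.1 = p.2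

theorem cyclicMatchCount_rotate (k t : ℕ) (w : List α) :
    cyclicMatchCount k (w.rotate t) = cyclicMatchCount k w := by
  rw [cyclicMatchCount, rotate_rotate, Nat.add_comm, ← rotate_rotate, zip,
    ← zipWith_rotate_distrib _ _ _ _ (length_rotate ..).symm, ((rotate_perm ..).countP_eq _)]
  rfl

theorem cyclicMatchCount_length_sub (k : ℕ) (w : List α) :
    cyclicMatchCount (w.length - k % w.length) w = cyclicMatchCount k w := by
  rcases eq_or_ne w [] with rfl | hw
  · rfl
  have hk : k % w.length ≤ w.length := (Nat.mod_lt _ (length_pos_iff.2 hw)).le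
  rw [← cyclicMatchCount_rotate _ (k % w.length), cyclicMatchCount, cyclicMatchCount,
    rotate_rotate, Nat.add_sub_cancel' hk, rotate_length, ← zip_swap, countP_map, rotate_mod]
  exact countP_congr fun _ _ => by simp [eq_comm]

theorem cyclicMatchCount_reverse (k : ℕ) (w : List α) :
    cyclicMatchCount k w.reverse = cyclicMatchCount k w := by
  rw [cyclicMatchCount, rotate_reverse, zip, ← reverse_zipWith (length_rotate ..).symm,
    countP_reverse]
  exact cyclicMatchCount_length_sub k w

theorem cyclicMatchCount_map_of_injOn (k : ℕ) {f : α → β} {w : List α}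
    (hf : Set.InjOn f {a | a ∈ w}) : cyclicMatchCount k (w.map f) = cyclicMatchCount k w := by
  rw [cyclicMatchCount, ← map_rotate, zip_map, countP_map]
  exact countP_congr fun p hp =>
    by simpa using hf.eq_iff (of_mem_zip hp).1 (mem_rotate.1 (of_mem_zip hp).2)

end List

open List

theorem WordIso.cyclicMatchCount_eq (k : ℕ) {v w : List ℕ} (h : WordIso v w) :
    cyclicMatchCount k v = cyclicMatchCount k w := by
  obtain ⟨f, hf, t, rfl | rfl⟩ := h <;>
    simp only [cyclicMatchCount_rotate, cyclicMatchCount_reverse,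
      cyclicMatchCount_map_of_injOn k hf]

theorem wordIso_refl (w : List ℕ) : WordIso w w :=
  ⟨id, Set.injOn_id _, 0, Or.inl (by simp)⟩

theorem not_wordIso_of_cyclicMatchCount_ne (k : ℕ) {v w : List ℕ}
    (h : cyclicMatchCount k v ≠ cyclicMatchCount k w) : ¬ WordIso v w :=
  mt (WordIso.cyclicMatchCount_eq k) h

/-- with `y₁ = [ijij]`, `y₂ = [ijkijk]`, `y₃ = [ijkikj]` and the five
relators `r'₁, …, r'₅`, the only integer vector `(α₁, α₂, α₃)` with
`α₁ tilde_{y₁}(r'_j) + α₂ tilde_{y₂}(r'_j) + α₃ tilde_{y₃}(r'_j) = 0` for all `j`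
is `(0, 0, 0)`. -/
theorem weakRIII_only_trivial_solution (α₁ α₂ α₃ : ℤ)
    (h : ∀ r ∈ [
        [((1 : ℤ), [1, 2, 3, 1, 3, 2]), (1, [1, 2, 1, 2]), (-1, [1, 1, 2, 2]),
          (-1, [1, 2, 1, 2, 3, 3])],
        [((1 : ℤ), [1, 2, 3, 1, 2, 3]), (-1, [1, 2, 3, 1, 3, 2])],
        [((3 : ℤ), [1, 2, 3, 1, 3, 2]), (-1, [1, 2, 3, 1, 2, 3]),
          (-2, [1, 2, 1, 2, 3, 3])],
        [((1 : ℤ), [1, 2, 1, 2, 3, 3]), (-2, [1, 2, 3, 3, 2, 1]),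
          (1, [1, 1, 2, 2, 3, 3])],
        [((1 : ℤ), [1, 2, 1, 2, 3, 3]), (-1, [1, 1, 2, 2, 3, 3])]],
      α₁ * coef [1, 2, 1, 2] r + α₂ * coef [1, 2, 3, 1, 2, 3] r +
        α₃ * coef [1, 2, 3, 1, 3, 2] r = 0) :
    α₁ = 0 ∧ α₂ = 0 ∧ α₃ = 0 := by
  have h₁ := h _ (mem_cons_self ..)
  have h₂ := h _ (mem_cons_of_mem _ (mem_cons_self ..))
  have h₃ := h _ (mem_cons_of_mem _ (mem_cons_of_mem _ (mem_cons_self ..)))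
  simp (disch := decide) only [coef, map_cons, map_nil, sum_cons, sum_nil, wordIso_refl,
    not_wordIso_of_cyclicMatchCount_ne 0, not_wordIso_of_cyclicMatchCount_ne 1,
    not_wordIso_of_cyclicMatchCount_ne 3, if_true, if_false] at h₁ h₂ h₃
  omega
end
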